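/- Let (X,𝔅,μ,T) be a measure-preserving system and α, β finite measurable partitions of X. Then the upper entropy dimension of the common refinement satisfies D̄_μ(T, α ∨ β) = max{ D̄_μ(T,α), D̄_μ(T,β) }. -/

import Mathlib

/-!
Refining a partition only increases the entropy of its joins, so entropy generating sequences of
`α` or `β` generate entropy for `α ∨ β`; this gives `≥`. Conversely, let `S` generate entropy for
`α ∨ β` at linear rate `c` and let `τ < D̄(S)`. By subadditivity of entropy, at infinitely many of
the `n` with `n / s_n^τ` bounded below, the join of `α` (say) along `s_1, …, s_n` has entropy at
least `c n / 2`. Writing this entropy as the sum of the conditional entropies of `T^{-s_i} α` given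
the earlier terms, each at most `H(α)`, a positive proportion of the indices `i ≤ n` carry an
increment of at least `c / 4`. By strong subadditivity these increments do not decrease when
passing to the subsequence `S'` of such indices, so `S'` generates entropy for `α`, and its density
in `S` gives `D̄(S', τ) > 0`, whence `τ ≤ D̄(S') ≤ D̄_μ(T, α)`.
-/

open MeasureTheory Filter Set
open scoped ENNReal symmDiff

noncomputable section

namespace EntDim

/-- An increasing sequence of positive integers `S = {s 0 < s 1 < ⋯}` (0-indexed,
so `s n` is the `(n+1)`-st element of `S`). -/
def IsPosSeq (s : ℕ → ℕ) : Prop := StrictMono s ∧ 0 < s 0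

/-- `D̄(S,τ) = limsup_n n / (s_n)^τ` (with the convention that the `n`-th term,
for `n` starting at `0`, is `(n+1)/(s n)^τ`, matching the 1-indexed definition). -/
def dimExprSup (s : ℕ → ℕ) (τ : ℝ) : ℝ≥0∞ :=
  Filter.atTop.limsup fun n : ℕ => ((n : ℝ≥0∞) + 1) / (s n : ℝ≥0∞) ^ τ

/-- `D̲(S,τ) = liminf_n n / (s_n)^τ`. -/
def dimExprInf (s : ℕ → ℕ) (τ : ℝ) : ℝ≥0∞ :=
  Filter.atTop.liminf fun n : ℕ => ((n : ℝ≥0∞) + 1) / (s n : ℝ≥0∞) ^ τ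

/-- The upper dimension `D̄(S) = inf {τ ≥ 0 | D̄(S,τ) = 0}` of a sequence. -/
def upperDim (s : ℕ → ℕ) : ℝ := sInf {τ : ℝ | 0 ≤ τ ∧ dimExprSup s τ = 0}

/-- The lower dimension `D̲(S) = inf {τ ≥ 0 | D̲(S,τ) = 0}` of a sequence. -/
def lowerDim (s : ℕ → ℕ) : ℝ := sInf {τ : ℝ | 0 ≤ τ ∧ dimExprInf s τ = 0}

variable {X : Type*} [MeasurableSpace X]

/-- `P : ι → Set X` is a finite measurable partition of `X`. -/
def IsPartition {ι : Type*} [Fintype ι] (P : ι → Set X) : Prop :=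
  (∀ i, MeasurableSet (P i)) ∧ Pairwise (Function.onFun Disjoint P) ∧ (⋃ i, P i) = Set.univ

/-- The entropy `H_μ(⋁_{i ∈ F} T^{-f i} P)` of the join of the preimage partitions
`T^{-f i} P` over a finite index set `F`. -/
def finJoinEnt (μ : Measure X) (T : X → X) {ι : Type*} [Fintype ι] (P : ι → Set X)
    (f : ℕ → ℕ) (F : Finset ℕ) : ℝ :=
  ∑ ω : F → ι, Real.negMulLog (μ (⋂ i : F, T^[f i.1] ⁻¹' (P (ω i)))).toReal

/-- `H_μ(⋁_{i=1}^{n} T^{-s_i} P)` (with `s` 0-indexed: this is the join over the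
first `n` elements of the sequence). -/
def seqJoinEnt (μ : Measure X) (T : X → X) {ι : Type*} [Fintype ι] (P : ι → Set X)
    (s : ℕ → ℕ) (n : ℕ) : ℝ :=
  finJoinEnt μ T P s (Finset.range n)

/-- `S` is an entropy generating sequence of the partition `P`:
`liminf_n (1/n) H_μ(⋁_{i=1}^n T^{-s_i} P) > 0`. -/
def IsEntGenSeq (μ : Measure X) (T : X → X) {ι : Type*} [Fintype ι] (P : ι → Set X)
    (s : ℕ → ℕ) : Prop :=
  IsPosSeq s ∧ 0 < Filter.atTop.liminf fun n : ℕ => seqJoinEnt μ T P s n / n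

/-- `S` is a positive entropy sequence of the partition `P`:
`limsup_n (1/n) H_μ(⋁_{i=1}^n T^{-s_i} P) > 0`. -/
def IsPosEntSeq (μ : Measure X) (T : X → X) {ι : Type*} [Fintype ι] (P : ι → Set X)
    (s : ℕ → ℕ) : Prop :=
  IsPosSeq s ∧ 0 < Filter.atTop.limsup fun n : ℕ => seqJoinEnt μ T P s n / n

/-- `D̄^e_μ(T,P)`: the supremum of upper dimensions over entropy generating sequences
of `P` (`0`, by convention `sSup ∅ = 0`, if there are none). This is the upper
entropy dimension `D̄_μ(T,P)` of the partition `P`. -/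
def upperEntDimPart (μ : Measure X) (T : X → X) {ι : Type*} [Fintype ι]
    (P : ι → Set X) : ℝ :=
  sSup {d : ℝ | ∃ s : ℕ → ℕ, IsEntGenSeq μ T P s ∧ d = upperDim s}

/-- `D̲^e_μ(T,P)`: the supremum of lower dimensions over entropy generating sequences,
i.e. the lower entropy dimension `D̲_μ(T,P)` of the partition `P`. -/
def lowerEntDimPart (μ : Measure X) (T : X → X) {ι : Type*} [Fintype ι]
    (P : ι → Set X) : ℝ :=
  sSup {d : ℝ | ∃ s : ℕ → ℕ, IsEntGenSeq μ T P s ∧ d = lowerDim s}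

/-- `D̄^p_μ(T,P)`: the supremum of upper dimensions over positive entropy sequences of `P`. -/
def upperPosDimPart (μ : Measure X) (T : X → X) {ι : Type*} [Fintype ι]
    (P : ι → Set X) : ℝ :=
  sSup {d : ℝ | ∃ s : ℕ → ℕ, IsPosEntSeq μ T P s ∧ d = upperDim s}

/-- `D̲^p_μ(T,P)`: the supremum of lower dimensions over positive entropy sequences of `P`. -/
def lowerPosDimPart (μ : Measure X) (T : X → X) {ι : Type*} [Fintype ι]
    (P : ι → Set X) : ℝ :=
  sSup {d : ℝ | ∃ s : ℕ → ℕ, IsPosEntSeq μ T P s ∧ d = lowerDim s}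

/-- The upper metric entropy dimension `D̄_μ(X,T)`: the supremum of `D̄_μ(T,P)`
over all finite measurable partitions `P` of `X`. -/
def upperEntDim (μ : Measure X) (T : X → X) : ℝ :=
  sSup {d : ℝ | ∃ (k : ℕ) (P : Fin k → Set X), IsPartition P ∧ d = upperEntDimPart μ T P}

/-- The lower metric entropy dimension `D̲_μ(X,T)`. -/
def lowerEntDim (μ : Measure X) (T : X → X) : ℝ :=
  sSup {d : ℝ | ∃ (k : ℕ) (P : Fin k → Set X), IsPartition P ∧ d = lowerEntDimPart μ T P}

/-- `D̄^p_μ(X,T)`: the supremum of `D̄^p_μ(T,P)` over all finite measurable partitions. -/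
def upperPosDim (μ : Measure X) (T : X → X) : ℝ :=
  sSup {d : ℝ | ∃ (k : ℕ) (P : Fin k → Set X), IsPartition P ∧ d = upperPosDimPart μ T P}

/-- The two-set partition `{A, X \ A}`. -/
def pairPart (A : Set X) : Fin 2 → Set X := ![A, Aᶜ]

/-- The dimension set `Dims_μ(X,T) = {D̄_μ(T,{A,Aᶜ}) : A ∈ 𝔅, 0 < μ(A) < 1}`. -/
def dimsSet (μ : Measure X) (T : X → X) : Set ℝ :=
  {d : ℝ | ∃ A : Set X, MeasurableSet A ∧ 0 < μ A ∧ μ A < 1 ∧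
    d = upperEntDimPart μ T (pairPart A)}

/-- The system is null: every sequence entropy (along any increasing sequence of
positive integers, for any finite measurable partition) vanishes. -/
def IsNullSystem (μ : Measure X) (T : X → X) : Prop :=
  ∀ (k : ℕ) (P : Fin k → Set X), IsPartition P → ∀ s : ℕ → ℕ, IsPosSeq s →
    Filter.atTop.limsup (fun n : ℕ => seqJoinEnt μ T P s n / n) = 0

end EntDim

namespace EntDim

open Real

theorem negMulLog_sum_le {γ : Type*} (s : Finset γ) {x : γ → ℝ} (hx : ∀ i ∈ s, 0 ≤ x i) :
    negMulLog (∑ i ∈ s, x i) ≤ ∑ i ∈ s, negMulLog (x i) := by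
  simp only [negMulLog, neg_mul, Finset.sum_neg_distrib, neg_le_neg_iff, Finset.sum_mul]
  refine Finset.sum_le_sum fun i hi => ?_
  rcases (hx i hi).eq_or_lt with h | h
  · simp [← h]
  · exact mul_le_mul_of_nonneg_left (log_le_log h (Finset.single_le_sum hx hi)) h.le

/-- Gibbs' inequality for one term: `p log (r s / (p t)) ≤ r s / t - p`, from `log x ≤ x - 1`. -/
theorem negMulLog_add_mul_log_le {p r s t : ℝ} (hp : 0 ≤ p) (hpr : p ≤ r) (hps : p ≤ s)
    (ht : 0 < t) :
    negMulLog p + p * log r + p * log s - p * log t ≤ r * s / t - p := by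
  rcases hp.eq_or_lt with rfl | hp
  · simpa using div_nonneg (mul_nonneg hpr hps) ht.le
  have hr : 0 < r := hp.trans_le hpr
  have hs : 0 < s := hp.trans_le hps
  have hlog := log_le_sub_one_of_pos (x := r * s / (t * p)) (by positivity)
  rw [log_div (by positivity) (by positivity), log_mul hr.ne' hs.ne',
    log_mul ht.ne' hp.ne'] at hlog
  have h := mul_le_mul_of_nonneg_left hlog hp.le
  have hrhs : p * (r * s / (t * p) - 1) = r * s / t - p := by field_simp
  rw [hrhs] at h
  simp only [negMulLog]
  linear_combination h

/-- Subadditivity `H(X, Y) ≤ H(X) + H(Y)` of Shannon entropy, for a joint distribution `p`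
of arbitrary total mass. -/
theorem sum_negMulLog_add_negMulLog_sum_le {ι κ : Type*} [Fintype ι] [Fintype κ]
    {p : ι → κ → ℝ} (hp : ∀ i k, 0 ≤ p i k) :
    ∑ i, ∑ k, negMulLog (p i k) + negMulLog (∑ i, ∑ k, p i k)
      ≤ ∑ i, negMulLog (∑ k, p i k) + ∑ k, negMulLog (∑ i, p i k) := by
  have hrow : ∀ i, 0 ≤ ∑ k, p i k := fun i => Finset.sum_nonneg fun k _ => hp i k
  rcases (Finset.sum_nonneg fun i _ => hrow i).eq_or_lt with ht | ht
  · have hzero : p = 0 := funext fun i => (Fintype.sum_eq_zero_iff_of_nonneg (hp i)).1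
      (congrFun ((Fintype.sum_eq_zero_iff_of_nonneg hrow).1 ht.symm) i)
    simp [hzero]
  set t := ∑ i, ∑ k, p i k with ht_def
  have hterm := fun i k => negMulLog_add_mul_log_le (hp i k)
    (Finset.single_le_sum (fun k _ => hp i k) (Finset.mem_univ k))
    (Finset.single_le_sum (fun i _ => hp i k) (Finset.mem_univ i)) ht
  have hsum := Finset.sum_le_sum fun i (_ : i ∈ Finset.univ) =>
    Finset.sum_le_sum fun k (_ : k ∈ Finset.univ) => hterm i k
  have hcol : ∑ k, ∑ i, p i k = t := Finset.sum_comm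
  simp only [Finset.sum_add_distrib, Finset.sum_sub_distrib, ← Finset.sum_div, ← Finset.mul_sum,
    ← Finset.sum_mul] at hsum
  rw [Finset.sum_comm (f := fun i k => p i k * log (∑ i, p i k))] at hsum
  simp only [← Finset.sum_mul, ← Finset.sum_mul, hcol, ← ht_def] at hsum
  rw [mul_self_div_self] at hsum
  simp only [negMulLog, neg_mul, Finset.sum_neg_distrib] at hsum ⊢
  linarith

section Atoms

variable {X ι κ : Type*} {T : X → X} {P : ι → Set X} {Q : κ → Set X} {f : ℕ → ℕ}
  {F G : Finset ℕ}

/-- The common refinement `A ∨ B`. -/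
def partJoin {γ δ : Type*} (A : γ → Set X) (B : δ → Set X) : γ × δ → Set X :=
  fun p => A p.1 ∩ B p.2

/-- The atoms `⋂_{i ∈ F} T^{-f i} P_{ω i}` of `⋁_{i ∈ F} T^{-f i} P`. -/
def joinAtoms (T : X → X) (P : ι → Set X) (f : ℕ → ℕ) (F : Finset ℕ) : (F → ι) → Set X :=
  fun ω => ⋂ i : F, T^[f i] ⁻¹' P (ω i)

theorem joinAtoms_union (h : Disjoint F G) :
    ∃ e : ((F ∪ G : Finset ℕ) → ι) ≃ (F → ι) × (G → ι),
      joinAtoms T P f (F ∪ G) = partJoin (joinAtoms T P f F) (joinAtoms T P f G) ∘ e := by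
  refine ⟨((Equiv.Finset.union F G h).arrowCongr (Equiv.refl ι)).symm.trans
    (Equiv.sumArrowEquivProdArrow _ _ _), funext fun ω => ?_⟩
  simp only [joinAtoms, partJoin, Function.comp_apply]
  rw [← (Equiv.Finset.union F G h).surjective.iInter_comp, Set.iInter_sum]
  rfl

theorem joinAtoms_comp {g : ℕ → ℕ} (hg : Set.InjOn g F) :
    ∃ e : (F → ι) ≃ (F.image g → ι), joinAtoms T P (f ∘ g) F = joinAtoms T P f (F.image g) ∘ e := by
  let e : F ≃ F.image g := Equiv.ofBijective (fun i => ⟨g i, Finset.mem_image_of_mem g i.2⟩)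
    ⟨fun a b hab => Subtype.ext (hg a.2 b.2 (congrArg Subtype.val hab)), fun ⟨j, hj⟩ => by
      obtain ⟨i, hi, rfl⟩ := Finset.mem_image.1 hj; exact ⟨⟨i, hi⟩, rfl⟩⟩
  refine ⟨e.arrowCongr (Equiv.refl ι), funext fun ω => ?_⟩
  simp only [joinAtoms, Function.comp_apply]
  rw [← e.surjective.iInter_comp]
  simp only [Equiv.arrowCongr_apply, Equiv.coe_refl, Function.comp_apply, id,
    Equiv.symm_apply_apply]
  rfl

theorem joinAtoms_singleton (j : ℕ) :
    joinAtoms T P f {j} ∘ (Equiv.funUnique _ ι).symm = fun c => T^[f j] ⁻¹' P c := by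
  ext c x
  simp [joinAtoms]

theorem joinAtoms_partJoin (F : Finset ℕ) :
    joinAtoms T (partJoin P Q) f F = partJoin (joinAtoms T P f F) (joinAtoms T Q f F) ∘
      Equiv.arrowProdEquivProdArrow F (fun _ => ι) (fun _ => κ) := by
  ext ω x
  simp [joinAtoms, partJoin, Set.mem_iInter, forall_and]

end Atoms

section Entropy

variable {X : Type*} [MeasurableSpace X] {μ : Measure X}
  {γ δ ε : Type*} [Fintype γ] [Fintype δ] [Fintype ε]

/-- The entropy `H_μ(A)` of a finite family of sets, read as the atoms of a partition. -/
def entropy (μ : Measure X) (A : γ → Set X) : ℝ :=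
  ∑ c, negMulLog (μ.real (A c))

theorem entropy_comp_equiv (A : γ → Set X) (e : δ ≃ γ) : entropy μ (A ∘ e) = entropy μ A :=
  e.sum_comp fun c => negMulLog (μ.real (A c))

theorem entropy_nonneg [IsProbabilityMeasure μ] (A : γ → Set X) : 0 ≤ entropy μ A :=
  Finset.sum_nonneg fun _ _ => negMulLog_nonneg measureReal_nonneg measureReal_le_one

theorem entropy_preimage {Y : Type*} [MeasurableSpace Y] {ν : Measure Y} {g : X → Y}
    (hg : MeasurePreserving g μ ν) {A : γ → Set Y} (hA : ∀ c, MeasurableSet (A c)) :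
    entropy μ (fun c => g ⁻¹' A c) = entropy ν A := by
  simp only [entropy, measureReal_def, hg.measure_preimage (hA _).nullMeasurableSet]

theorem entropy_partJoin_comm (A : γ → Set X) (B : δ → Set X) :
    entropy μ (partJoin A B) = entropy μ (partJoin B A) :=
  Fintype.sum_equiv (Equiv.prodComm γ δ) _ _ fun p => by simp [partJoin, Set.inter_comm]

theorem IsPartition.partJoin {A : γ → Set X} {B : δ → Set X} (hA : IsPartition A)
    (hB : IsPartition B) : IsPartition (partJoin A B) := by
  refine ⟨fun p => (hA.1 p.1).inter (hB.1 p.2), fun p q hpq => ?_, ?_⟩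
  · rcases not_and_or.1 (mt Prod.ext_iff.2 hpq) with h | h
    · exact (hA.2.1 h).mono Set.inter_subset_left Set.inter_subset_left
    · exact (hB.2.1 h).mono Set.inter_subset_right Set.inter_subset_right
  · refine Set.eq_univ_of_forall fun x => ?_
    obtain ⟨i, hi⟩ := Set.mem_iUnion.1 (hA.2.2 ▸ Set.mem_univ x)
    obtain ⟨k, hk⟩ := Set.mem_iUnion.1 (hB.2.2 ▸ Set.mem_univ x)
    exact Set.mem_iUnion.2 ⟨(i, k), hi, hk⟩

theorem IsPartition.sum_measure_inter [IsFiniteMeasure μ] {B : δ → Set X} (hB : IsPartition B)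
    {S : Set X} (hS : MeasurableSet S) : ∑ k, μ.real (S ∩ B k) = μ.real S := by
  have hdisj : Pairwise (Function.onFun Disjoint fun k => S ∩ B k) := fun k k' hkk' =>
    (hB.2.1 hkk').mono Set.inter_subset_right Set.inter_subset_right
  rw [← measureReal_iUnion_fintype hdisj fun k => hS.inter (hB.1 k), ← Set.inter_iUnion, hB.2.2,
    Set.inter_univ]

theorem IsPartition.sum_measure_inter_left [IsFiniteMeasure μ] {B : δ → Set X}
    (hB : IsPartition B) {S : Set X} (hS : MeasurableSet S) :
    ∑ k, μ.real (B k ∩ S) = μ.real S := by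
  simpa only [Set.inter_comm] using hB.sum_measure_inter hS

theorem entropy_le_entropy_partJoin [IsFiniteMeasure μ] {A : γ → Set X} {B : δ → Set X}
    (hA : ∀ c, MeasurableSet (A c)) (hB : IsPartition B) :
    entropy μ A ≤ entropy μ (partJoin A B) := by
  rw [entropy, entropy, Fintype.sum_prod_type]
  refine Finset.sum_le_sum fun i _ => ?_
  rw [← hB.sum_measure_inter (hA i)]
  exact negMulLog_sum_le _ fun k _ => measureReal_nonneg

theorem entropy_partJoin_le_add [IsProbabilityMeasure μ] {A : γ → Set X} {B : δ → Set X}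
    (hA : IsPartition A) (hB : IsPartition B) :
    entropy μ (partJoin A B) ≤ entropy μ A + entropy μ B := by
  have hrow (i : γ) : ∑ k, μ.real (A i ∩ B k) = μ.real (A i) := hB.sum_measure_inter (hA.1 i)
  have hcol (k : δ) : ∑ i, μ.real (A i ∩ B k) = μ.real (B k) :=
    hA.sum_measure_inter_left (hB.1 k)
  have htot : ∑ i, μ.real (A i) = 1 := by
    simpa using hA.sum_measure_inter_left (μ := μ) MeasurableSet.univ
  have h := sum_negMulLog_add_negMulLog_sum_le (p := fun i k => μ.real (A i ∩ B k))
    fun i k => measureReal_nonneg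
  simp only [hrow, hcol, htot, negMulLog_one, add_zero] at h
  simpa only [entropy, partJoin, Fintype.sum_prod_type] using h

/-- Strong subadditivity of entropy. -/
theorem entropy_partJoin_add_le [IsFiniteMeasure μ] {A : γ → Set X} {B : δ → Set X}
    {C : ε → Set X} (hA : IsPartition A) (hB : IsPartition B) (hC : ∀ c, MeasurableSet (C c)) :
    entropy μ (partJoin (partJoin A B) C) + entropy μ C
      ≤ entropy μ (partJoin A C) + entropy μ (partJoin B C) := by
  have hrow (i : γ) (c : ε) : ∑ k, μ.real (A i ∩ B k ∩ C c) = μ.real (A i ∩ C c) := by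
    simpa only [Set.inter_right_comm] using hB.sum_measure_inter ((hA.1 i).inter (hC c))
  have hcol (k : δ) (c : ε) : ∑ i, μ.real (A i ∩ B k ∩ C c) = μ.real (B k ∩ C c) := by
    simpa only [Set.inter_assoc] using hA.sum_measure_inter_left ((hB.1 k).inter (hC c))
  have htot (c : ε) : ∑ i, μ.real (A i ∩ C c) = μ.real (C c) :=
    hA.sum_measure_inter_left (hC c)
  have h := Finset.sum_le_sum fun c (_ : c ∈ Finset.univ) =>
    sum_negMulLog_add_negMulLog_sum_le (p := fun i k => μ.real (A i ∩ B k ∩ C c))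
      fun i k => measureReal_nonneg
  simp only [hrow, hcol, htot, Finset.sum_add_distrib] at h
  simp only [entropy, partJoin, Fintype.sum_prod_type]
  refine ((congrArg (· + _) ?_).trans_le h).trans_eq
    (congrArg₂ (· + ·) Finset.sum_comm Finset.sum_comm)
  exact (Finset.sum_congr rfl fun _ _ => Finset.sum_comm).trans Finset.sum_comm

end Entropy

section FinJoinEnt

variable {X : Type*} [MeasurableSpace X] {μ : Measure X} {T : X → X}
  {ι κ : Type*} [Fintype ι] [Fintype κ] {P : ι → Set X} {Q : κ → Set X} {f : ℕ → ℕ}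
  {F G H : Finset ℕ}

theorem finJoinEnt_eq_entropy (μ : Measure X) (T : X → X) (P : ι → Set X) (f : ℕ → ℕ)
    (F : Finset ℕ) : finJoinEnt μ T P f F = entropy μ (joinAtoms T P f F) := rfl

theorem IsPartition.joinAtoms (hT : Measurable T) (hP : IsPartition P) (f : ℕ → ℕ)
    (F : Finset ℕ) : IsPartition (joinAtoms T P f F) := by
  refine ⟨fun ω => .iInter fun i => (hP.1 (ω i)).preimage (hT.iterate _), fun ω ω' hne => ?_, ?_⟩
  · obtain ⟨i, hi⟩ := Function.ne_iff.1 hne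
    exact ((hP.2.1 hi).preimage _).mono (Set.iInter_subset _ i) (Set.iInter_subset _ i)
  · refine Set.eq_univ_of_forall fun x => ?_
    have hcov (y : X) : ∃ i, y ∈ P i := Set.mem_iUnion.1 (hP.2.2 ▸ Set.mem_univ y)
    choose c hc using hcov
    exact Set.mem_iUnion.2 ⟨fun i => c (T^[f i] x), Set.mem_iInter.2 fun i => hc _⟩

theorem finJoinEnt_union (h : Disjoint F G) :
    finJoinEnt μ T P f (F ∪ G) = entropy μ (partJoin (joinAtoms T P f F) (joinAtoms T P f G)) := by
  obtain ⟨e, he⟩ := joinAtoms_union (T := T) (P := P) (f := f) h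
  rw [finJoinEnt_eq_entropy, he, entropy_comp_equiv]

theorem finJoinEnt_union_le [IsProbabilityMeasure μ] (hT : Measurable T) (hP : IsPartition P)
    (h : Disjoint F G) :
    finJoinEnt μ T P f (F ∪ G) ≤ finJoinEnt μ T P f F + finJoinEnt μ T P f G := by
  rw [finJoinEnt_union h]
  exact entropy_partJoin_le_add (hP.joinAtoms hT f F) (hP.joinAtoms hT f G)

theorem finJoinEnt_le_union [IsFiniteMeasure μ] (hT : Measurable T) (hP : IsPartition P)
    (h : Disjoint F G) : finJoinEnt μ T P f F ≤ finJoinEnt μ T P f (F ∪ G) := by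
  rw [finJoinEnt_union h]
  exact entropy_le_entropy_partJoin (hP.joinAtoms hT f F).1 (hP.joinAtoms hT f G)

theorem finJoinEnt_union_add_le [IsFiniteMeasure μ] (hT : Measurable T) (hP : IsPartition P)
    (hFG : Disjoint F G) (hFH : Disjoint F H) (hGH : Disjoint G H) :
    finJoinEnt μ T P f (F ∪ G ∪ H) + finJoinEnt μ T P f H
      ≤ finJoinEnt μ T P f (F ∪ H) + finJoinEnt μ T P f (G ∪ H) := by
  obtain ⟨e, he⟩ := joinAtoms_union (T := T) (P := P) (f := f) hFG
  rw [finJoinEnt_union (Finset.disjoint_union_left.2 ⟨hFH, hGH⟩), finJoinEnt_union hFH,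
    finJoinEnt_union hGH, he]
  exact (congrArg (· + _) (entropy_comp_equiv (partJoin (partJoin _ _) _)
    (e.prodCongr (Equiv.refl _)))).trans_le
      (entropy_partJoin_add_le (hP.joinAtoms hT f F) (hP.joinAtoms hT f G) (hP.joinAtoms hT f H).1)

/-- Conditioning on more of the past can only decrease the entropy of the new time `j`. -/
theorem finJoinEnt_insert_sub_le [IsFiniteMeasure μ] (hT : Measurable T) (hP : IsPartition P)
    {j : ℕ} (hGH : G ⊆ H) (hj : j ∉ H) :
    finJoinEnt μ T P f (insert j H) - finJoinEnt μ T P f H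
      ≤ finJoinEnt μ T P f (insert j G) - finJoinEnt μ T P f G := by
  have h := finJoinEnt_union_add_le (f := f) (μ := μ) hT hP (F := {j}) (G := H \ G) (H := G)
    (Finset.disjoint_singleton_left.2 fun h => hj (Finset.mem_sdiff.1 h).1)
    (Finset.disjoint_singleton_left.2 fun h => hj (hGH h)) Finset.sdiff_disjoint
  rw [Finset.union_assoc, Finset.sdiff_union_of_subset hGH, ← Finset.insert_eq,
    ← Finset.insert_eq] at h
  linarith

theorem finJoinEnt_singleton (hT : MeasurePreserving T μ μ) (hP : IsPartition P) (j : ℕ) :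
    finJoinEnt μ T P f {j} = entropy μ P := by
  rw [finJoinEnt_eq_entropy, ← entropy_comp_equiv _ (Equiv.funUnique _ ι).symm,
    joinAtoms_singleton]
  exact entropy_preimage (hT.iterate _) hP.1

theorem finJoinEnt_empty [IsProbabilityMeasure μ] : finJoinEnt μ T P f ∅ = 0 := by
  simp [finJoinEnt]

theorem finJoinEnt_comp {g : ℕ → ℕ} (hg : Set.InjOn g F) :
    finJoinEnt μ T P (f ∘ g) F = finJoinEnt μ T P f (F.image g) := by
  obtain ⟨e, he⟩ := joinAtoms_comp (T := T) (P := P) (f := f) hg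
  rw [finJoinEnt_eq_entropy, he, entropy_comp_equiv]; rfl

theorem finJoinEnt_partJoin (F : Finset ℕ) :
    finJoinEnt μ T (partJoin P Q) f F
      = entropy μ (partJoin (joinAtoms T P f F) (joinAtoms T Q f F)) := by
  rw [finJoinEnt_eq_entropy, joinAtoms_partJoin, entropy_comp_equiv]

theorem finJoinEnt_partJoin_le_add [IsProbabilityMeasure μ] (hT : Measurable T)
    (hP : IsPartition P) (hQ : IsPartition Q) (F : Finset ℕ) :
    finJoinEnt μ T (partJoin P Q) f F ≤ finJoinEnt μ T P f F + finJoinEnt μ T Q f F := by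
  rw [finJoinEnt_partJoin]
  exact entropy_partJoin_le_add (hP.joinAtoms hT f F) (hQ.joinAtoms hT f F)

theorem finJoinEnt_le_finJoinEnt_partJoin_left [IsFiniteMeasure μ] (hT : Measurable T)
    (hP : IsPartition P) (hQ : IsPartition Q) (F : Finset ℕ) :
    finJoinEnt μ T P f F ≤ finJoinEnt μ T (partJoin P Q) f F := by
  rw [finJoinEnt_partJoin]
  exact entropy_le_entropy_partJoin (hP.joinAtoms hT f F).1 (hQ.joinAtoms hT f F)

theorem finJoinEnt_le_finJoinEnt_partJoin_right [IsFiniteMeasure μ] (hT : Measurable T)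
    (hP : IsPartition P) (hQ : IsPartition Q) (F : Finset ℕ) :
    finJoinEnt μ T Q f F ≤ finJoinEnt μ T (partJoin P Q) f F := by
  rw [finJoinEnt_partJoin, entropy_partJoin_comm]
  exact entropy_le_entropy_partJoin (hQ.joinAtoms hT f F).1 (hP.joinAtoms hT f F)

end FinJoinEnt

section SeqJoinEnt

variable {X : Type*} [MeasurableSpace X] {μ : Measure X} [IsProbabilityMeasure μ] {T : X → X}
  {ι : Type*} [Fintype ι] {P : ι → Set X} {s : ℕ → ℕ}

theorem seqJoinEnt_zero : seqJoinEnt μ T P s 0 = 0 :=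
  finJoinEnt_empty

theorem seqJoinEnt_mono (hT : Measurable T) (hP : IsPartition P) :
    Monotone (seqJoinEnt μ T P s) :=
  monotone_nat_of_le_succ fun n => by
    rw [seqJoinEnt, seqJoinEnt, Finset.range_add_one, Finset.insert_eq, Finset.union_comm]
    exact finJoinEnt_le_union hT hP (Finset.disjoint_singleton_right.2 Finset.notMem_range_self)

theorem seqJoinEnt_nonneg (hT : Measurable T) (hP : IsPartition P) (n : ℕ) :
    0 ≤ seqJoinEnt μ T P s n :=
  seqJoinEnt_zero.symm.le.trans (seqJoinEnt_mono hT hP n.zero_le)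

theorem seqJoinEnt_succ_le (hT : MeasurePreserving T μ μ) (hP : IsPartition P) (n : ℕ) :
    seqJoinEnt μ T P s (n + 1) ≤ seqJoinEnt μ T P s n + entropy μ P := by
  rw [seqJoinEnt, seqJoinEnt, Finset.range_add_one, Finset.insert_eq,
    ← finJoinEnt_singleton (f := s) hT hP n, add_comm]
  exact finJoinEnt_union_le hT.measurable hP
    (Finset.disjoint_singleton_left.2 Finset.notMem_range_self)

theorem seqJoinEnt_le_mul (hT : MeasurePreserving T μ μ) (hP : IsPartition P) (n : ℕ) :
    seqJoinEnt μ T P s n ≤ n * entropy μ P := by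
  induction n with
  | zero => simp [seqJoinEnt_zero]
  | succ n ih =>
    push_cast
    linarith [seqJoinEnt_succ_le (s := s) hT hP n]

theorem seqJoinEnt_div_le (hT : MeasurePreserving T μ μ) (hP : IsPartition P) (n : ℕ) :
    seqJoinEnt μ T P s n / n ≤ entropy μ P :=
  div_le_of_le_mul₀ n.cast_nonneg (entropy_nonneg P)
    ((seqJoinEnt_le_mul hT hP n).trans_eq (mul_comm _ _))

/-- Conditional entropy increments can only grow when passing to a subsequence, since there is
less of the past to condition on. -/
theorem seqJoinEnt_sub_le_comp (hT : Measurable T) (hP : IsPartition P) {g : ℕ → ℕ}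
    (hg : StrictMono g) (k : ℕ) :
    seqJoinEnt μ T P s (g k + 1) - seqJoinEnt μ T P s (g k)
      ≤ seqJoinEnt μ T P (s ∘ g) (k + 1) - seqJoinEnt μ T P (s ∘ g) k := by
  have himage (m : ℕ) :
      seqJoinEnt μ T P (s ∘ g) m = finJoinEnt μ T P s ((Finset.range m).image g) :=
    finJoinEnt_comp hg.injective.injOn
  have hsub : (Finset.range k).image g ⊆ Finset.range (g k) := by
    intro x hx
    obtain ⟨i, hi, rfl⟩ := Finset.mem_image.1 hx
    exact Finset.mem_range.2 (hg (Finset.mem_range.1 hi))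
  rw [himage, himage, Finset.range_add_one, Finset.image_insert, seqJoinEnt, seqJoinEnt,
    Finset.range_add_one]
  exact finJoinEnt_insert_sub_le hT hP hsub Finset.notMem_range_self

theorem isEntGenSeq_iff (hT : MeasurePreserving T μ μ) (hP : IsPartition P) :
    IsEntGenSeq μ T P s ↔
      IsPosSeq s ∧ ∃ c > 0, ∀ᶠ n in atTop, c * n ≤ seqJoinEnt μ T P s n := by
  have hlow : IsBoundedUnder (· ≥ ·) atTop fun n => seqJoinEnt μ T P s n / n :=
    isBoundedUnder_of ⟨0, fun n => div_nonneg (seqJoinEnt_nonneg hT.measurable hP n)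
      n.cast_nonneg⟩
  have hupp : IsBoundedUnder (· ≤ ·) atTop fun n => seqJoinEnt μ T P s n / n :=
    isBoundedUnder_of ⟨_, seqJoinEnt_div_le hT hP⟩
  refine and_congr_right fun _ => ⟨fun h => ?_, fun ⟨c, hc, h⟩ => ?_⟩
  · obtain ⟨c, hc, hlt⟩ := exists_between h
    refine ⟨c, hc, ?_⟩
    filter_upwards [eventually_lt_of_lt_liminf hlt hlow, eventually_gt_atTop 0] with n hn hn0
    exact (le_div_iff₀ (Nat.cast_pos.2 hn0)).1 hn.le
  · refine hc.trans_le (le_liminf_of_le hupp.isCoboundedUnder_ge ?_)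
    filter_upwards [h, eventually_gt_atTop 0] with n hn hn0
    exact (le_div_iff₀ (Nat.cast_pos.2 hn0)).2 hn

theorem IsEntGenSeq.of_seqJoinEnt_le {κ : Type*} [Fintype κ] {R : κ → Set X}
    (hT : MeasurePreserving T μ μ) (hP : IsPartition P) (hR : IsPartition R)
    (h : IsEntGenSeq μ T P s) (hle : ∀ n, seqJoinEnt μ T P s n ≤ seqJoinEnt μ T R s n) :
    IsEntGenSeq μ T R s := by
  obtain ⟨hs, c, hc, hgrowth⟩ := (isEntGenSeq_iff hT hP).1 h
  exact (isEntGenSeq_iff hT hR).2 ⟨hs, c, hc, hgrowth.mono fun n hn => hn.trans (hle n)⟩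

theorem isEntGenSeq_comp (hT : MeasurePreserving T μ μ) (hP : IsPartition P) (hs : IsPosSeq s)
    {g : ℕ → ℕ} (hg : StrictMono g) {c : ℝ} (hc : 0 < c)
    (hE : ∀ k, c ≤ seqJoinEnt μ T P s (g k + 1) - seqJoinEnt μ T P s (g k)) :
    IsEntGenSeq μ T P (s ∘ g) := by
  refine (isEntGenSeq_iff hT hP).2 ⟨⟨hs.1.comp hg, hs.2.trans_le (hs.1.monotone (Nat.zero_le _))⟩,
    c, hc, .of_forall fun k => ?_⟩
  induction k with
  | zero => simp [seqJoinEnt_zero]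
  | succ k ih =>
    push_cast
    linarith [hE k, seqJoinEnt_sub_le_comp (μ := μ) (s := s) hT.measurable hP hg k]

end SeqJoinEnt

theorem sub_mul_le_mul_count {E : ℕ → ℝ} {b c L : ℝ} (hb : 0 ≤ b) (hL : ∀ i, E i ≤ L) {n : ℕ}
    (h : c * n ≤ ∑ i ∈ Finset.range n, E i) :
    (c - b) * n ≤ L * Nat.count (fun i => b ≤ E i) n := by
  rw [Nat.count_eq_card_filter_range]
  have hsplit := Finset.sum_filter_add_sum_filter_not (Finset.range n) (fun i => b ≤ E i) E
  have hbig := Finset.sum_le_card_nsmul ((Finset.range n).filter fun i => b ≤ E i) E L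
    fun i _ => hL i
  have hsmall := Finset.sum_le_card_nsmul ((Finset.range n).filter fun i => ¬b ≤ E i) E b
    fun i hi => (not_le.1 (Finset.mem_filter.1 hi).2).le
  have hcard : (((Finset.range n).filter fun i => ¬b ≤ E i).card : ℝ) ≤ n := by
    exact_mod_cast (Finset.card_filter_le _ _).trans (Finset.card_range n).le
  rw [nsmul_eq_mul] at hbig hsmall
  nlinarith [mul_le_mul_of_nonneg_left hcard hb]

theorem infinite_of_frequently_mul_le_count {p : ℕ → Prop} [DecidablePred p] {δ : ℝ}
    (hδ : 0 < δ) (h : ∃ᶠ n in atTop, δ * (n + 1) ≤ Nat.count p n) : {i | p i}.Infinite := by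
  intro hfin
  obtain ⟨N, hN⟩ := exists_nat_gt (hfin.toFinset.card / δ)
  obtain ⟨n, hn, hNn⟩ := (h.and_eventually (eventually_ge_atTop N)).exists
  have hcard : (Nat.count p n : ℝ) ≤ hfin.toFinset.card := by
    exact_mod_cast Nat.count_le_card hfin n
  have hNn' : (N : ℝ) ≤ n := by exact_mod_cast hNn
  rw [div_lt_iff₀ hδ] at hN
  nlinarith

theorem tendsto_count_atTop {p : ℕ → Prop} [DecidablePred p] (hp : {i | p i}.Infinite) :
    Tendsto (Nat.count p) atTop atTop :=
  (Nat.count_monotone p).tendsto_atTop_atTop fun k =>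
    ⟨Nat.nth p k, (Nat.count_nth_of_infinite hp k).ge⟩

section Dim

variable {s : ℕ → ℕ} {τ : ℝ}

/-- The `n`-th term `(n + 1) / s_n ^ τ` of the sequence whose limsup is `D̄(S, τ)`. -/
def dimRatio (s : ℕ → ℕ) (τ : ℝ) (n : ℕ) : ℝ≥0∞ :=
  ((n : ℝ≥0∞) + 1) / (s n : ℝ≥0∞) ^ τ

theorem IsPosSeq.succ_le (hs : IsPosSeq s) (n : ℕ) : n + 1 ≤ s n := by
  induction n with
  | zero => exact hs.2
  | succ n ih => exact ih.trans_lt (hs.1 n.lt_succ_self)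

theorem dimExprSup_antitone (hs : IsPosSeq s) : Antitone (dimExprSup s) := fun _ _ h =>
  limsup_le_limsup (.of_forall fun n => ENNReal.div_le_div_left
    (ENNReal.rpow_le_rpow_of_exponent_le (Nat.one_le_cast.2 ((Nat.le_add_left 1 n).trans
      (hs.succ_le n))) h) _)

theorem dimExprSup_two (hs : IsPosSeq s) : dimExprSup s 2 = 0 := by
  refine (tendsto_of_tendsto_of_tendsto_of_le_of_le tendsto_const_nhds
    ENNReal.tendsto_inv_nat_nhds_zero (fun n => zero_le) fun n => ?_).limsup_eq
  have hn : ((n : ℝ≥0∞) + 1) ≠ 0 := by simp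
  have hn' : ((n : ℝ≥0∞) + 1) ≠ ⊤ := by simp
  calc dimRatio s 2 n ≤ ((n : ℝ≥0∞) + 1) / ((n : ℝ≥0∞) + 1) ^ (2 : ℝ) :=
        ENNReal.div_le_div_left (ENNReal.rpow_le_rpow (by exact_mod_cast hs.succ_le n)
          zero_le_two) _
    _ = ((n : ℝ≥0∞) + 1)⁻¹ := by
        rw [ENNReal.rpow_two, sq, div_eq_mul_inv, ENNReal.mul_inv (.inl hn) (.inl hn'), ← mul_assoc,
          ENNReal.mul_inv_cancel hn hn', one_mul]
    _ ≤ (n : ℝ≥0∞)⁻¹ := ENNReal.inv_le_inv.2 le_self_add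

theorem upperDim_nonneg (s : ℕ → ℕ) : 0 ≤ upperDim s :=
  Real.sInf_nonneg fun _ h => h.1

theorem upperDim_le_two (hs : IsPosSeq s) : upperDim s ≤ 2 :=
  csInf_le ⟨0, fun _ h => h.1⟩ ⟨zero_le_two, dimExprSup_two hs⟩

theorem le_upperDim (hs : IsPosSeq s) (h : 0 < dimExprSup s τ) : τ ≤ upperDim s :=
  le_csInf ⟨2, zero_le_two, dimExprSup_two hs⟩ fun _ hτ' =>
    le_of_not_gt fun hlt => (dimExprSup_antitone hs hlt.le).not_gt (hτ'.2 ▸ h)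

theorem dimExprSup_pos_of_lt_upperDim (hτ : 0 ≤ τ) (h : τ < upperDim s) :
    0 < dimExprSup s τ :=
  pos_iff_ne_zero.2 fun h0 => h.not_ge (csInf_le ⟨0, fun _ h => h.1⟩ ⟨hτ, h0⟩)

theorem dimExprSup_comp_nth_pos {p : ℕ → Prop} [DecidablePred p] (hs : Monotone s)
    (hp : {i | p i}.Infinite) {δ : ℝ} (hδ : 0 < δ) {a : ℝ≥0∞} (ha : 0 < a) (hτ : 0 ≤ τ)
    (h : ∃ᶠ n in atTop, a < dimRatio s τ n ∧ δ * (n + 1) ≤ Nat.count p n) :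
    0 < dimExprSup (s ∘ Nat.nth p) τ := by
  refine (ENNReal.mul_pos (ENNReal.ofReal_pos.2 hδ).ne' ha.ne').trans_le
    (le_limsup_of_frequently_le' ?_)
  refine ((tendsto_sub_atTop_nat 1).comp (tendsto_count_atTop hp)).frequently_map _ ?_ h
  rintro n ⟨han, hcount⟩
  have hk : 0 < Nat.count p n := by exact_mod_cast (by positivity : 0 < δ * (n + 1)).trans_le hcount
  have hnum : ENNReal.ofReal δ * ((n : ℝ≥0∞) + 1) ≤ ((Nat.count p n - 1 : ℕ) : ℝ≥0∞) + 1 := by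
    have hsucc : ((n : ℝ≥0∞) + 1) = ENNReal.ofReal ((n : ℝ) + 1) := by
      exact_mod_cast (ENNReal.ofReal_natCast (n + 1)).symm
    have hpred : ((Nat.count p n - 1 : ℕ) : ℝ≥0∞) + 1 = ENNReal.ofReal (Nat.count p n) := by
      rw [ENNReal.ofReal_natCast]
      exact_mod_cast Nat.sub_add_cancel hk
    rw [hsucc, hpred, ← ENNReal.ofReal_mul hδ.le]
    exact ENNReal.ofReal_le_ofReal hcount
  have hden : (s (Nat.nth p (Nat.count p n - 1)) : ℝ≥0∞) ^ τ ≤ (s n : ℝ≥0∞) ^ τ :=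
    ENNReal.rpow_le_rpow
      (by exact_mod_cast hs (Nat.nth_lt_of_lt_count (Nat.sub_lt hk one_pos)).le) hτ
  calc ENNReal.ofReal δ * a ≤ ENNReal.ofReal δ * dimRatio s τ n := by gcongr
    _ = ENNReal.ofReal δ * ((n : ℝ≥0∞) + 1) / (s n : ℝ≥0∞) ^ τ := (mul_div_assoc _ _ _).symm
    _ ≤ _ := ENNReal.div_le_div hnum hden

end Dim

section UpperEntDimPart

variable {X : Type*} [MeasurableSpace X] {μ : Measure X} {T : X → X}
  {ι κ : Type*} [Fintype ι] [Fintype κ] {P : ι → Set X} {Q : κ → Set X} {s : ℕ → ℕ}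

theorem upperDim_le_upperEntDimPart (h : IsEntGenSeq μ T P s) :
    upperDim s ≤ upperEntDimPart μ T P :=
  le_csSup ⟨2, by rintro _ ⟨s, hs, rfl⟩; exact upperDim_le_two hs.1⟩ ⟨s, h, rfl⟩

theorem upperEntDimPart_nonneg : 0 ≤ upperEntDimPart μ T P :=
  Real.sSup_nonneg (by rintro _ ⟨s, -, rfl⟩; exact upperDim_nonneg s)

theorem upperEntDimPart_le {M : ℝ} (hM : 0 ≤ M) (h : ∀ s, IsEntGenSeq μ T P s → upperDim s ≤ M) :
    upperEntDimPart μ T P ≤ M :=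
  Real.sSup_le (by rintro _ ⟨s, hs, rfl⟩; exact h s hs) hM

theorem upperEntDimPart_mono (h : ∀ s, IsEntGenSeq μ T P s → IsEntGenSeq μ T Q s) :
    upperEntDimPart μ T P ≤ upperEntDimPart μ T Q :=
  upperEntDimPart_le upperEntDimPart_nonneg fun _ hs => upperDim_le_upperEntDimPart (h _ hs)

/-- The subsequence of `S` along the times `i` where `T^{-s_i} P` adds at least `c / 2` of
conditional entropy generates entropy for `P`, and linear entropy growth at the `n` with
`dimRatio s τ n > a` makes those times dense enough there to keep `D̄(·, τ) > 0`. -/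
theorem le_upperEntDimPart_of_frequently [IsProbabilityMeasure μ] (hT : MeasurePreserving T μ μ)
    (hP : IsPartition P) (hs : IsPosSeq s) {c τ : ℝ} (hc : 0 < c) (hτ : 0 ≤ τ)
    {a : ℝ≥0∞} (ha : 0 < a)
    (h : ∃ᶠ n in atTop, a < dimRatio s τ n ∧ c * n ≤ seqJoinEnt μ T P s n) :
    τ ≤ upperEntDimPart μ T P := by
  set E : ℕ → ℝ := fun i => seqJoinEnt μ T P s (i + 1) - seqJoinEnt μ T P s i
  set p : ℕ → Prop := fun i => c / 2 ≤ E i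
  set L := entropy μ P + 1
  have hL : 0 < L := by linarith [entropy_nonneg (μ := μ) P]
  have hcount (n : ℕ) (hn : 1 ≤ n) (hcn : c * n ≤ seqJoinEnt μ T P s n) :
      c / (4 * L) * (n + 1) ≤ Nat.count p n := by
    have hsum : ∑ i ∈ Finset.range n, E i = seqJoinEnt μ T P s n := by
      rw [Finset.sum_range_sub, seqJoinEnt_zero, sub_zero]
    have := sub_mul_le_mul_count (E := E) (b := c / 2) (L := L) (by positivity)
      (fun i => by linarith [seqJoinEnt_succ_le (s := s) hT hP i]) (hsum ▸ hcn)
    have hn' : (n : ℝ) + 1 ≤ 2 * n := by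
      have : (1 : ℝ) ≤ n := by exact_mod_cast hn
      linarith
    rw [div_mul_eq_mul_div, div_le_iff₀ (by positivity)]
    nlinarith
  have hfreq : ∃ᶠ n in atTop, a < dimRatio s τ n ∧ c / (4 * L) * (n + 1) ≤ Nat.count p n :=
    (h.and_eventually (eventually_ge_atTop 1)).mono fun n ⟨⟨han, hcn⟩, hn⟩ =>
      ⟨han, hcount n hn hcn⟩
  have hp : {i | p i}.Infinite :=
    infinite_of_frequently_mul_le_count (by positivity) (hfreq.mono fun _ hn => hn.2)
  have hgen : IsEntGenSeq μ T P (s ∘ Nat.nth p) :=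
    isEntGenSeq_comp hT hP hs (Nat.nth_strictMono hp) (half_pos hc) (Nat.nth_mem_of_infinite hp)
  calc τ ≤ upperDim (s ∘ Nat.nth p) :=
        le_upperDim hgen.1 (dimExprSup_comp_nth_pos hs.1.monotone hp (by positivity) ha hτ hfreq)
    _ ≤ upperEntDimPart μ T P := upperDim_le_upperEntDimPart hgen

theorem upperDim_le_max_of_isEntGenSeq_partJoin [IsProbabilityMeasure μ]
    (hT : MeasurePreserving T μ μ) (hP : IsPartition P) (hQ : IsPartition Q)
    (h : IsEntGenSeq μ T (partJoin P Q) s) :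
    upperDim s ≤ max (upperEntDimPart μ T P) (upperEntDimPart μ T Q) := by
  obtain ⟨hs, c, hc, hgrowth⟩ := (isEntGenSeq_iff hT (hP.partJoin hQ)).1 h
  refine le_of_forall_lt_imp_le_of_dense fun τ hτ => ?_
  rcases lt_or_ge τ 0 with hneg | hτ0
  · exact hneg.le.trans (le_max_of_le_left upperEntDimPart_nonneg)
  obtain ⟨a, ha, haτ⟩ := exists_between (dimExprSup_pos_of_lt_upperDim hτ0 hτ)
  have hsplit : ∃ᶠ n in atTop,
      (a < dimRatio s τ n ∧ c / 2 * n ≤ seqJoinEnt μ T P s n) ∨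
        (a < dimRatio s τ n ∧ c / 2 * n ≤ seqJoinEnt μ T Q s n) := by
    refine ((frequently_lt_of_lt_limsup (by isBoundedDefault) haτ).and_eventually hgrowth).mono
      fun n ⟨han, hn⟩ => ?_
    have hsub : seqJoinEnt μ T (partJoin P Q) s n ≤ seqJoinEnt μ T P s n + seqJoinEnt μ T Q s n :=
      finJoinEnt_partJoin_le_add hT.measurable hP hQ _
    by_cases hPn : c / 2 * n ≤ seqJoinEnt μ T P s n
    · exact .inl ⟨han, hPn⟩
    · exact .inr ⟨han, by linarith⟩
  rcases frequently_or_distrib.1 hsplit with hfP | hfQ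
  · exact (le_upperEntDimPart_of_frequently hT hP hs (half_pos hc) hτ0 ha hfP).trans
      (le_max_left _ _)
  · exact (le_upperEntDimPart_of_frequently hT hQ hs (half_pos hc) hτ0 ha hfQ).trans
      (le_max_right _ _)

end UpperEntDimPart

/-- The upper entropy dimension of the common refinement `α ∨ β`
is the maximum of the upper entropy dimensions of `α` and `β`. -/
theorem upperEntDimPart_join {X : Type*} [MeasurableSpace X]
    (μ : Measure X) [IsProbabilityMeasure μ] (T : X → X) (hT : MeasurePreserving T μ μ)
    {ι κ : Type*} [Fintype ι] [Fintype κ] (P : ι → Set X) (Q : κ → Set X)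
    (hP : IsPartition P) (hQ : IsPartition Q) :
    upperEntDimPart μ T (fun p : ι × κ => P p.1 ∩ Q p.2)
      = max (upperEntDimPart μ T P) (upperEntDimPart μ T Q) := by
  change upperEntDimPart μ T (partJoin P Q) = _
  refine le_antisymm (upperEntDimPart_le (le_max_of_le_left upperEntDimPart_nonneg)
    fun s hs => upperDim_le_max_of_isEntGenSeq_partJoin hT hP hQ hs) (max_le ?_ ?_)
  · exact upperEntDimPart_mono fun s hs => hs.of_seqJoinEnt_le hT hP (hP.partJoin hQ)
      fun n => finJoinEnt_le_finJoinEnt_partJoin_left hT.measurable hP hQ _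
  · exact upperEntDimPart_mono fun s hs => hs.of_seqJoinEnt_le hT hQ (hP.partJoin hQ)
      fun n => finJoinEnt_le_finJoinEnt_partJoin_right hT.measurable hP hQ _

end EntDim
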